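/- Let d, k ≥ 1 be integers, ε ∈ [0, 2^{-kd}], and let μ be a dyadic mean (k,η,ε)-porous Borel probability measure on [0,1)^d. Let R* be the tree of cubes constructed from μ as described (with any admissible choice of small-measure cubes), and for x ∈ [0,1)^d and n ≥ 1 set N_n(x) = #{i ∈ {0,…,n−1} : R_i(x) ∈ 𝒩}, let M_n(x) be the dyadic level of R_n(x) (i.e. R_n(x) ∈ D_{M_n(x)}), and η_n(x) = 1 − N_n(x)/M_n(x). Then liminf_{n→∞} η_n(x) ≥ η for μ-almost every x. -/

import Mathlib

open MeasureTheory Filter Metric Set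
open scoped ENNReal NNReal

/-- The half-open dyadic cube of side `2^{-n}` containing `x`. -/
def dyadicCube (d n : ℕ) (x : EuclideanSpace ℝ (Fin d)) : Set (EuclideanSpace ℝ (Fin d)) :=
  {y | ∀ j : Fin d, ⌊(2 : ℝ) ^ n * y j⌋ = ⌊(2 : ℝ) ^ n * x j⌋}

/-- `por₂(μ,x,n,ε) ≤ k`: there is `1 ≤ j ≤ k` and a dyadic subcube `R` of `D_n(x)`,
`j` levels below, with `μ(R) ≤ ε·μ(D_n(x))`. -/
def por2Le {d : ℕ} (μ : Measure (EuclideanSpace ℝ (Fin d)))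
    (x : EuclideanSpace ℝ (Fin d)) (n k : ℕ) (ε : ℝ) : Prop :=
  ∃ j : ℕ, 1 ≤ j ∧ j ≤ k ∧ ∃ y ∈ dyadicCube d n x,
    μ (dyadicCube d (n + j) y) ≤ ENNReal.ofReal ε * μ (dyadicCube d n x)

/-- `μ` is dyadic mean `(k,η,ε)`-porous: for `μ`-a.e. `x`,
`liminf_n (1/n)·#{i < n : por₂(μ,x,i,ε) ≤ k} ≥ η`. -/
def DyadicMeanPorousWith {d : ℕ} (μ : Measure (EuclideanSpace ℝ (Fin d)))
    (k : ℕ) (η ε : ℝ) : Prop :=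
  ∀ᵐ x ∂μ, η ≤ Filter.liminf
    (fun n : ℕ => (Set.ncard {i : ℕ | i < n ∧ por2Le μ x i k ε} : ℝ) / n) Filter.atTop

/-- `μ` is dyadic mean `(k,η)`-porous: dyadic mean `(k,η,ε)`-porous for all `ε > 0`. -/
def DyadicMeanPorous {d : ℕ} (μ : Measure (EuclideanSpace ℝ (Fin d))) (k : ℕ) (η : ℝ) : Prop :=
  ∀ ε > 0, DyadicMeanPorousWith μ k η ε

/-- The unit cube `[0,1)^d`. -/
def unitCube (d : ℕ) : Set (EuclideanSpace ℝ (Fin d)) :=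
  {x | ∀ j : Fin d, 0 ≤ x j ∧ x j < 1}

/-- The dyadic cube `D_n(x)` is porous: some dyadic subcube `k` levels below has
`μ`-measure at most `ε·μ(D_n(x))`. -/
def PorousCube {d : ℕ} (μ : Measure (EuclideanSpace ℝ (Fin d))) (ε : ℝ) (k n : ℕ)
    (x : EuclideanSpace ℝ (Fin d)) : Prop :=
  ∃ y ∈ dyadicCube d n x, μ (dyadicCube d (n + k) y) ≤ ENNReal.ofReal ε * μ (dyadicCube d n x)

/-- An admissible choice of small-measure subcubes: for every porous dyadic cube `D_n(x)`,
`c n x` marks a subcube `R = D_{n+k}(c n x) ⊆ D_n(x)` with `μ(R) ≤ ε·μ(D_n(x))`; the choice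
only depends on the cube `D_n(x)`. -/
structure AdmissibleChoice {d : ℕ} (μ : Measure (EuclideanSpace ℝ (Fin d))) (ε : ℝ)
    (k : ℕ) where
  c : ℕ → EuclideanSpace ℝ (Fin d) → EuclideanSpace ℝ (Fin d)
  mem : ∀ n x, PorousCube μ ε k n x → c n x ∈ dyadicCube d n x
  small : ∀ n x, PorousCube μ ε k n x →
    μ (dyadicCube d (n + k) (c n x)) ≤ ENNReal.ofReal ε * μ (dyadicCube d n x)
  compat : ∀ n x y, y ∈ dyadicCube d n x → c n y = c n x

open scoped Classical in
/-- The dyadic level of the offspring cube of the tree `R*` containing `y`, when the current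
node is the dyadic cube `D_m(y)`: if `D_m(y)` is not porous, subdivide into the dyadic cubes
of the next level; if it is porous with chosen small cube `R = D_{m+k}(c m y)`, the offspring
containing `y` is `R` itself if `y ∈ R`, and otherwise the first dyadic ancestor cube of `y`
below `D_m(y)` that does not contain `R`. -/
noncomputable def childLevel {d : ℕ} (μ : Measure (EuclideanSpace ℝ (Fin d))) (ε : ℝ)
    (k : ℕ) (C : AdmissibleChoice μ ε k) (m : ℕ) (y : EuclideanSpace ℝ (Fin d)) : ℕ :=
  if PorousCube μ ε k m y then
    (if C.c m y ∈ dyadicCube d (m + k) y then m + k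
     else m + sInf {j : ℕ | 1 ≤ j ∧ C.c m y ∉ dyadicCube d (m + j) y})
  else m + 1

/-- The dyadic level `M_n(x)` of the tree node `R_n(x)`, so that `R_n(x) = D_{M_n(x)}(x)`. -/
noncomputable def levelSeq {d : ℕ} (μ : Measure (EuclideanSpace ℝ (Fin d))) (ε : ℝ)
    (k : ℕ) (C : AdmissibleChoice μ ε k) (x : EuclideanSpace ℝ (Fin d)) : ℕ → ℕ
  | 0 => 0
  | n + 1 => childLevel μ ε k C (levelSeq μ ε k C x n) x

/-!
Every tree node `R_i(x)` is the dyadic cube `D_{M_i(x)}(x)`, and the levels `M_i(x)` increase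
strictly. A node in `𝒩` at a level `M_i(x) < M_n(x)` is in particular a level `< M_n(x)` where
`por₂(μ,x,·,ε) > k`, so `N_n(x)` is at most the number of such bad levels and `η_n(x)` is at
least the proportion of good levels below `M_n(x)`. Since `M_n(x) → ∞`, the `liminf` of these
proportions is at least `η` by porosity.
-/

lemma ncard_lt_and_add_ncard_lt_and_not (p : ℕ → Prop) (m : ℕ) :
    {i | i < m ∧ p i}.ncard + {i | i < m ∧ ¬ p i}.ncard = m := by
  classical
  have hcoe : ∀ r : ℕ → Prop, [DecidablePred r] →
      {i | i < m ∧ r i} = ((Finset.range m).filter r : Set ℕ) := fun r _ => by ext; simp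
  rw [hcoe p, hcoe (¬ p ·), Set.ncard_coe_finset, Set.ncard_coe_finset,
    Finset.card_filter_add_card_filter_not, Finset.card_range]

lemma ncard_lt_and_div_le_one (p : ℕ → Prop) (m : ℕ) :
    ({i | i < m ∧ p i}.ncard : ℝ) / m ≤ 1 := by
  apply div_le_one_of_le₀ _ m.cast_nonneg
  exact_mod_cast (Nat.le.intro (ncard_lt_and_add_ncard_lt_and_not p m))

section Counting

variable {p q : ℕ → Prop}

lemma ncard_lt_and_le_ncard_lt_and_of_strictMono {f : ℕ → ℕ} (hf : StrictMono f)
    (hpq : ∀ i, p i → q (f i)) (n : ℕ) :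
    {i | i < n ∧ p i}.ncard ≤ {j | j < f n ∧ q j}.ncard :=
  Set.ncard_le_ncard_of_injOn f (fun _ hi => ⟨hf hi.1, hpq _ hi.2⟩) hf.injective.injOn
    ((Set.finite_Iio (f n)).subset fun _ hj => hj.1)

lemma ncard_lt_and_div_le_one_sub_of_strictMono {f : ℕ → ℕ} (hf : StrictMono f)
    (hpq : ∀ i, p i → ¬ q (f i)) (n : ℕ) :
    ({j | j < f n ∧ q j}.ncard : ℝ) / f n ≤ 1 - ({i | i < n ∧ p i}.ncard : ℝ) / f n := by
  rcases (f n).eq_zero_or_pos with h0 | hpos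
  · simp [h0]
  rw [le_sub_iff_add_le, ← add_div, div_le_one (by exact_mod_cast hpos)]
  have hsplit := ncard_lt_and_add_ncard_lt_and_not q (f n)
  have hle := ncard_lt_and_le_ncard_lt_and_of_strictMono (q := (¬ q ·)) hf hpq n
  exact_mod_cast (by omega : {j | j < f n ∧ q j}.ncard + {i | i < n ∧ p i}.ncard ≤ f n)

end Counting

lemma dyadicCube_anti {d m m' : ℕ} (h : m ≤ m') (y : EuclideanSpace ℝ (Fin d)) :
    dyadicCube d m' y ⊆ dyadicCube d m y := by
  intro z hz j
  have hfloor (t : ℝ) :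
      ⌊(2 : ℝ) ^ m * t⌋ = ⌊(2 : ℝ) ^ m' * t⌋ / ((2 ^ (m' - m) : ℕ) : ℤ) := by
    rw [← Int.floor_div_natCast, Nat.cast_pow, Nat.cast_ofNat, ← Nat.sub_add_cancel h, pow_add,
      Nat.add_sub_cancel, mul_assoc, mul_div_cancel_left₀ _ (by positivity)]
  rw [hfloor, hfloor, hz j]

lemma porousCube_of_por2Le {d i k : ℕ} {μ : Measure (EuclideanSpace ℝ (Fin d))}
    {x : EuclideanSpace ℝ (Fin d)} {ε : ℝ} (h : por2Le μ x i k ε) :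
    PorousCube μ ε k i x := by
  obtain ⟨j, -, hjk, y, hy, hsmall⟩ := h
  exact ⟨y, hy, (measure_mono (dyadicCube_anti (by omega) y)).trans hsmall⟩

section Tree

variable {d k : ℕ} {μ : Measure (EuclideanSpace ℝ (Fin d))} {ε : ℝ}

lemma lt_childLevel (hk : 1 ≤ k) (C : AdmissibleChoice μ ε k) (m : ℕ)
    (y : EuclideanSpace ℝ (Fin d)) : m < childLevel μ ε k C m y := by
  unfold childLevel
  split_ifs with _ hR
  · omega
  · have := (Nat.sInf_mem (⟨k, hk, hR⟩ :
      {j : ℕ | 1 ≤ j ∧ C.c m y ∉ dyadicCube d (m + j) y}.Nonempty)).1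
    omega
  · omega

lemma levelSeq_strictMono (hk : 1 ≤ k) (C : AdmissibleChoice μ ε k)
    (x : EuclideanSpace ℝ (Fin d)) : StrictMono (levelSeq μ ε k C x) :=
  strictMono_nat_of_lt_succ fun _ => lt_childLevel hk C _ x

end Tree

theorem liminf_good_scale_fraction_general (d k : ℕ) (hk : 1 ≤ k) (ε η : ℝ)
    (μ : Measure (EuclideanSpace ℝ (Fin d)))
    (hpor : DyadicMeanPorousWith μ k η ε) (C : AdmissibleChoice μ ε k) :
    ∀ᵐ x ∂μ, η ≤ Filter.liminf (fun n : ℕ =>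
      1 - (Set.ncard {i : ℕ | i < n ∧ ¬ PorousCube μ ε k (levelSeq μ ε k C x i) x} : ℝ)
            / (levelSeq μ ε k C x n : ℝ)) Filter.atTop := by
  filter_upwards [hpor] with x hx
  set good : ℕ → ℝ := fun m => ({i | i < m ∧ por2Le μ x i k ε}.ncard : ℝ) / m
  have hM := levelSeq_strictMono hk C x
  have hgood_nonneg : ∀ m, 0 ≤ good m := fun m => div_nonneg (Nat.cast_nonneg _) m.cast_nonneg
  have hgood_le : ∀ m, good m ≤ 1 := ncard_lt_and_div_le_one _
  calc η ≤ liminf good atTop := hx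
    _ ≤ liminf (good ∘ levelSeq μ ε k C x) atTop :=
      hM.tendsto_atTop.liminf_le_liminf_comp (isCoboundedUnder_ge_of_le _ hgood_le)
        (isBoundedUnder_of_eventually_ge (.of_forall hgood_nonneg))
    _ ≤ _ :=
      liminf_le_liminf (.of_forall <| ncard_lt_and_div_le_one_sub_of_strictMono hM
          fun _ hN hG => hN (porousCube_of_por2Le hG))
        (isBoundedUnder_of_eventually_ge (.of_forall fun _ => hgood_nonneg _))
        (isCoboundedUnder_ge_of_le _ fun _ => sub_le_self _ (by positivity))

/-- Let `μ` be a dyadic mean `(k,η,ε)`-porous probability measure on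
`[0,1)^d` with `ε ∈ [0,2^{-kd}]`, and let `R*` be the associated tree (for any admissible
choice `C`). With `N_n(x) = #{i < n : R_i(x) ∈ 𝒩}`, `M_n(x)` the dyadic level of `R_n(x)`
and `η_n(x) = 1 − N_n(x)/M_n(x)`, one has `liminf_n η_n(x) ≥ η` for `μ`-a.e. `x`. -/
theorem liminf_good_scale_fraction (d k : ℕ) (hd : 1 ≤ d) (hk : 1 ≤ k) (ε η : ℝ)
    (hε0 : 0 ≤ ε) (hε : ε ≤ ((2 : ℝ) ^ (k * d))⁻¹)
    (μ : Measure (EuclideanSpace ℝ (Fin d))) [IsProbabilityMeasure μ]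
    (hsupp : μ (unitCube d) = 1)
    (hpor : DyadicMeanPorousWith μ k η ε) (C : AdmissibleChoice μ ε k) :
    ∀ᵐ x ∂μ, η ≤ Filter.liminf (fun n : ℕ =>
      1 - (Set.ncard {i : ℕ | i < n ∧ ¬ PorousCube μ ε k (levelSeq μ ε k C x i) x} : ℝ)
            / (levelSeq μ ε k C x n : ℝ)) Filter.atTop :=
  liminf_good_scale_fraction_general d k hk ε η μ hpor C
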